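/- arXiv:0902.1954 — 2 statements merged into one kernel-verified Lean document; each statement's English description precedes it below -/
import Mathlib

section
/- For every n ≥ 0, the inclusion (∂Δ[n] × Δ[1]) ∪ (Δ[n] × {0}) → Δ[n] × Δ[1] is a finite composition of pushouts of horn inclusions of the form Λ^k[n+1] → Δ[n+1] with 0 ≤ k < n+1; in particular, it is a left anodyne extension, i.e. it belongs to the smallest class of morphisms of simplicial sets containing the horn inclusions Λ^k[m] → Δ[m] (m ≥ 1, 0 ≤ k < m) and closed under pushouts, transfinite compositions and retracts. -/
open CategoryTheory CategoryTheory.Limits Simplicial MonoidalCategory SSet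

universe u

/-- A morphism `f` is a retract of a morphism `g` in the arrow category. -/
def RetractArrow {A B X Y : SSet.{u}} (f : A ⟶ B) (g : X ⟶ Y) : Prop :=
  ∃ (s : Arrow.mk f ⟶ Arrow.mk g) (r : Arrow.mk g ⟶ Arrow.mk f), s ≫ r = 𝟙 _

/-- The inclusion functor of the subset `{i | i < j}` of a preorder `J` into `J`. -/
def iioFunctor {J : Type} [Preorder J] (j : J) : Set.Iio j ⥤ J where
  obj i := i.1
  map φ := homOfLE (leOfHom φ)

/-- The cocone on the restriction of a functor `F : J ⥤ SSet` to `{i | i < j}`,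
with apex `F.obj j`; asking it to be colimiting expresses that `F` is continuous
at the limit element `j`. -/
def coconeAt {J : Type} [Preorder J] (F : J ⥤ SSet.{u}) (j : J) :
    Cocone (iioFunctor j ⋙ F) where
  pt := F.obj j
  ι :=
    { app := fun i => F.map (homOfLE i.2.le)
      naturality := fun i i' φ => by
        dsimp [iioFunctor]
        rw [Category.comp_id, ← F.map_comp]
        rfl }

/-- A class of morphisms of simplicial sets is weakly saturated if it is closed under
pushouts, retracts and transfinite compositions. -/
structure IsWeaklySaturated (W : MorphismProperty SSet.{u}) : Prop where
  pushout : ∀ {A B X Y : SSet.{u}} {t : A ⟶ X} {f : A ⟶ B} {g : X ⟶ Y} {b : B ⟶ Y},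
      IsPushout t f g b → W f → W g
  retract : ∀ {A B X Y : SSet.{u}} {f : A ⟶ B} {g : X ⟶ Y},
      _root_.RetractArrow f g → W g → W f
  transfinite : ∀ (J : Type) [LinearOrder J] [OrderBot J] [SuccOrder J] [WellFoundedLT J]
      (F : J ⥤ SSet.{u}),
      (∀ j : J, ¬ IsMax j → W (F.map (homOfLE (Order.le_succ j)))) →
      (∀ j : J, Order.IsSuccLimit j → Nonempty (IsColimit (coconeAt F j))) →
      ∀ (c : Cocone F), IsColimit c → W (c.ι.app ⊥)

/-- The class of left horn inclusions `Λ[m, k] → Δ[m]`, `m ≥ 1`, `0 ≤ k < m`. -/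
def LeftHornIncls : MorphismProperty SSet.{u} := fun _ _ f =>
  ∃ (m : ℕ) (k : Fin (m + 1)), (k : ℕ) < m ∧ Arrow.mk f = Arrow.mk ((horn m k).ι)

/-- A left anodyne extension: a morphism belonging to the smallest class of morphisms of
simplicial sets containing the left horn inclusions and closed under pushouts,
transfinite compositions and retracts. -/
def LeftAnodyne {A B : SSet.{u}} (f : A ⟶ B) : Prop :=
  ∀ W : MorphismProperty SSet.{u}, IsWeaklySaturated W →
    (∀ {X Y : SSet.{u}} (g : X ⟶ Y), LeftHornIncls g → W g) → W f

/-- `f` is a pushout of some morphism belonging to the class `S`. -/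
def IsPushoutOfMem (S : MorphismProperty SSet.{u}) {A B : SSet.{u}} (f : A ⟶ B) : Prop :=
  ∃ (X Y : SSet.{u}) (g : X ⟶ Y) (t : X ⟶ A) (b : Y ⟶ B), S g ∧ IsPushout t g f b

/-- Finite (nonempty) compositions of pushouts of morphisms belonging to `S`. -/
inductive FiniteCompOfPushouts (S : MorphismProperty SSet.{u}) :
    ∀ {A B : SSet.{u}}, (A ⟶ B) → Prop
| of {A B : SSet.{u}} (f : A ⟶ B) : IsPushoutOfMem S f → FiniteCompOfPushouts S f
| comp {A B C : SSet.{u}} (f : A ⟶ B) (g : B ⟶ C) :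
      FiniteCompOfPushouts S f → IsPushoutOfMem S g → FiniteCompOfPushouts S (f ≫ g)

/-- The vertex `e` of `Δ[1]`, as a morphism `Δ[0] ⟶ Δ[1]`. -/
def vertexMap (e : Fin 2) : (Δ[0] : SSet.{u}) ⟶ Δ[1] :=
  SSet.stdSimplex.map (SimplexCategory.const _ _ e)

/-- The union `(∂Δ[n] × Δ[1]) ∪ (Δ[n] × {e})` inside `Δ[n] × Δ[1]`, i.e. the pushout
of `∂Δ[n] × Δ[1]` and `Δ[n] × {e}` over `∂Δ[n] × {e}`. -/
noncomputable def boundaryCorner (n : ℕ) (e : Fin 2) : SSet.{u} :=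
  pushout ((∂Δ[n] : SSet.{u}) ◁ vertexMap e) ((boundary n).ι ▷ Δ[0])

/-- The inclusion `(∂Δ[n] × Δ[1]) ∪ (Δ[n] × {e}) → Δ[n] × Δ[1]`. -/
noncomputable def boundaryCornerIncl (n : ℕ) (e : Fin 2) :
    boundaryCorner.{u} n e ⟶ Δ[n] ⊗ Δ[1] :=
  pushout.desc ((boundary n).ι ▷ Δ[1]) (Δ[n] ◁ vertexMap e)
    (whisker_exchange ((boundary n).ι) (vertexMap e))

/-!
`Δ[n] ⊗ Δ[1]` is the union of its `n + 1` nondegenerate `(n + 1)`-simplices `σ j`, with vertices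
`(0,0), …, (j,0), (j,1), …, (n,1)`. Attach them to the corner in the order `σ n, …, σ 0`. A face
of `σ j` opposite a vertex other than `(j,0)` lies in `∂Δ[n] ⊗ Δ[1]`, in `Δ[n] ⊗ {0}` (if `j = n`)
or in `σ (j + 1)`, while no simplex of `σ j` containing all vertices but possibly `(j,0)` was
attached before. So `σ j` meets the previous stage exactly in the horn `Λ[n + 1, j]`, and as `σ j`
is injective the next stage is a pushout of `Λ[n + 1, j] ⟶ Δ[n + 1]`, with `j < n + 1`.
-/

section WeaklySaturated

variable {W : MorphismProperty SSet.{u}}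

/-- `f ≫ g` is the transfinite composition of the diagram `f, g` indexed by `Fin 3`. -/
lemma IsWeaklySaturated.comp_mem (hW : IsWeaklySaturated W) {A B C : SSet.{u}} {f : A ⟶ B}
    {g : B ⟶ C} (hf : W f) (hg : W g) : W (f ≫ g) := by
  let F := ComposableArrows.mk₂ f g
  have hsucc : ∀ j : Fin 3, ¬ IsMax j → W (F.map (homOfLE (Order.le_succ j))) := by
    intro j hj
    fin_cases j
    · exact hf
    · exact hg
    · exact absurd isMax_top hj
  exact hW.transfinite (Fin 3) F hsucc
    (fun _ hj => absurd hj Order.not_isSuccLimit_of_isSuccArchimedean) _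
    (colimitOfDiagramTerminal isTerminalTop F)

lemma IsWeaklySaturated.mem_of_isPushoutOfMem (hW : IsWeaklySaturated W)
    {S : MorphismProperty SSet.{u}} (hS : S ≤ W) {A B : SSet.{u}} {f : A ⟶ B}
    (hf : IsPushoutOfMem S f) : W f := by
  obtain ⟨_, _, g, _, _, hg, sq⟩ := hf
  exact hW.pushout sq (hS g hg)

lemma IsWeaklySaturated.mem_of_finiteCompOfPushouts (hW : IsWeaklySaturated W)
    {S : MorphismProperty SSet.{u}} (hS : S ≤ W) {A B : SSet.{u}} {f : A ⟶ B}
    (hf : FiniteCompOfPushouts S f) : W f := by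
  induction hf with
  | of f hf => exact hW.mem_of_isPushoutOfMem hS hf
  | comp f g _ hg ih => exact hW.comp_mem ih (hW.mem_of_isPushoutOfMem hS hg)

end WeaklySaturated

def leftHornInclsOfDim (m : ℕ) : MorphismProperty SSet.{u} := fun _ _ f =>
  ∃ k : Fin (m + 1), (k : ℕ) < m ∧ Arrow.mk f = Arrow.mk ((horn m k).ι)

lemma leftHornInclsOfDim_le_leftHornIncls (m : ℕ) :
    leftHornInclsOfDim.{u} m ≤ LeftHornIncls := fun _ _ _ ⟨k, hk, e⟩ => ⟨m, k, hk, e⟩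

lemma FiniteCompOfPushouts.leftAnodyne {S : MorphismProperty SSet.{u}} (hS : S ≤ LeftHornIncls)
    {A B : SSet.{u}} {f : A ⟶ B} (hf : FiniteCompOfPushouts S f) : LeftAnodyne f :=
  fun _ hW hhorn => hW.mem_of_finiteCompOfPushouts (fun _ _ g hg => hhorn g (hS g hg)) hf

section FiniteCompOfPushouts

variable {S : MorphismProperty SSet.{u}}

lemma IsPushoutOfMem.of_arrow_iso {A B A' B' : SSet.{u}} {f : A ⟶ B} {f' : A' ⟶ B'}
    (hf : IsPushoutOfMem S f) (e : Arrow.mk f ≅ Arrow.mk f') : IsPushoutOfMem S f' := by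
  obtain ⟨X, Y, g, t, b, hg, sq⟩ := hf
  exact ⟨X, Y, g, t ≫ e.hom.left, b ≫ e.hom.right, hg,
    sq.of_iso (Iso.refl _) (Arrow.leftFunc.mapIso e) (Iso.refl _) (Arrow.rightFunc.mapIso e)
      (Category.id_comp _).symm rfl (Arrow.w e.hom).symm rfl⟩

lemma FiniteCompOfPushouts.trans {A B C : SSet.{u}} {f : A ⟶ B} {g : B ⟶ C}
    (hf : FiniteCompOfPushouts S f) (hg : FiniteCompOfPushouts S g) :
    FiniteCompOfPushouts S (f ≫ g) := by
  induction hg with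
  | of g hg => exact .comp f g hf hg
  | comp g g' _ hg' ih => simpa only [Category.assoc] using ih.comp _ _ hg'

lemma FiniteCompOfPushouts.iso_hom_comp {A' A B : SSet.{u}} (e : A' ≅ A) {f : A ⟶ B}
    (hf : FiniteCompOfPushouts S f) : FiniteCompOfPushouts S (e.hom ≫ f) := by
  induction hf with
  | of f hf => exact .of _ (hf.of_arrow_iso (Arrow.isoMk e.symm (Iso.refl _)))
  | comp f g _ hg ih => simpa only [Category.assoc] using ih.comp _ _ hg

lemma FiniteCompOfPushouts.comp_iso_hom {A B B' : SSet.{u}} {f : A ⟶ B}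
    (hf : FiniteCompOfPushouts S f) (e : B ≅ B') : FiniteCompOfPushouts S (f ≫ e.hom) := by
  cases hf with
  | of f hf => exact .of _ (hf.of_arrow_iso (Arrow.isoMk (Iso.refl _) e))
  | comp f g hf hg =>
    rw [Category.assoc]
    exact .comp _ _ hf (hg.of_arrow_iso (Arrow.isoMk (Iso.refl _) e))

lemma FiniteCompOfPushouts.ι_of_antitone {X : SSet.{u}} (Y : ℕ → X.Subcomplex)
    (hY : Antitone Y) (hY₀ : Y 0 = ⊤) (N : ℕ)
    (h : ∀ j ≤ N, IsPushoutOfMem S (Subcomplex.homOfLE (hY (Nat.le_succ j)))) :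
    FiniteCompOfPushouts S (Y (N + 1)).ι := by
  have hchain : FiniteCompOfPushouts S (Subcomplex.homOfLE (hY (Nat.zero_le (N + 1)))) := by
    induction N with
    | zero => exact .of _ (h 0 le_rfl)
    | succ N ih =>
      have := (FiniteCompOfPushouts.of _ (h (N + 1) le_rfl)).trans
        (ih fun j hj => h j (hj.trans N.le_succ))
      rwa [Subcomplex.homOfLE_comp] at this
  have : IsIso (Y 0).ι := by
    rw [hY₀]
    infer_instance
  simpa using hchain.comp_iso_hom (asIso (Y 0).ι)

end FiniteCompOfPushouts

instance (m : SimplexCategoryᵒᵖ) : Subsingleton ((Δ[0] : SSet.{u}).obj m) :=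
  stdSimplex.objEquiv.injective.subsingleton

instance (e : Fin 2) : Mono (vertexMap.{u} e) := by
  rw [NatTrans.mono_iff_mono_app]
  exact fun m => (mono_iff_injective _).2 fun a b _ => Subsingleton.elim a b

lemma SSet.Subcomplex.unionProd.isPushout_range {X Y A : SSet.{u}} (S : X.Subcomplex) (v : A ⟶ Y)
    [Mono v] :
    IsPushout ((S : SSet) ◁ v) (S.ι ▷ A) (Subcomplex.unionProd.ι₂ S (Subcomplex.range v))
      (X ◁ Subcomplex.toRange v ≫ Subcomplex.unionProd.ι₁ S (Subcomplex.range v)) := by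
  have hv : inv (Subcomplex.toRange v) ≫ v = (Subcomplex.range v).ι := by
    rw [IsIso.inv_comp_eq, Subcomplex.toRange_ι]
  refine (Subcomplex.unionProd.isPushout S _).flip.of_iso
    (whiskerLeftIso _ (asIso (Subcomplex.toRange v))).symm (Iso.refl _)
    (whiskerLeftIso _ (asIso (Subcomplex.toRange v))).symm (Iso.refl _) ?_ ?_ ?_ ?_
  · simp [← whiskerLeft_comp, hv]
  · simp [whisker_exchange]
  · simp
  · simp [← whiskerLeft_comp_assoc]

noncomputable def boundaryCornerIso (n : ℕ) (e : Fin 2) :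
    boundaryCorner.{u} n e ≅
      (Subcomplex.unionProd ∂Δ[n] (Subcomplex.range (vertexMap.{u} e)) : SSet.{u}) :=
  (Subcomplex.unionProd.isPushout_range _ _).isoPushout.symm

lemma boundaryCornerIso_hom_ι (n : ℕ) (e : Fin 2) :
    (boundaryCornerIso.{u} n e).hom ≫
      (Subcomplex.unionProd ∂Δ[n] (Subcomplex.range (vertexMap.{u} e))).ι =
      boundaryCornerIncl n e := by
  apply pushout.hom_ext
  · erw [IsPushout.inl_isoPushout_inv_assoc, pushout.inl_desc]
    simp
  · erw [IsPushout.inr_isoPushout_inv_assoc, pushout.inr_desc]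
    simp [← whiskerLeft_comp]

lemma SSet.stdSimplex.obj_ext {m : SimplexCategoryᵒᵖ} {k : ℕ} {x y : (Δ[k] : SSet.{u}).obj m}
    (h : ∀ i, (asOrderHom x i : ℕ) = asOrderHom y i) : x = y := by
  obtain ⟨x⟩ := x
  obtain ⟨y⟩ := y
  congr 1
  exact SimplexCategory.Hom.ext _ _ (OrderHom.ext _ _ (funext fun i => Fin.ext (h i)))

lemma SSet.mem_horn_iff_exists {m : SimplexCategoryᵒᵖ} {k : ℕ} (a : Fin (k + 1))
    (γ : (Δ[k] : SSet.{u}).obj m) :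
    γ ∈ (Λ[k, a]).obj m ↔
      ∃ v < k + 1, v ≠ (a : ℕ) ∧ ∀ i, (stdSimplex.asOrderHom γ i : ℕ) ≠ v := by
  rw [mem_horn_iff, Set.ne_univ_iff_exists_notMem]
  constructor
  · rintro ⟨v, hv⟩
    simp only [Set.mem_union, Set.mem_range, Set.mem_singleton_iff, not_or, not_exists] at hv
    exact ⟨v, v.isLt, fun h => hv.2 (Fin.ext h), fun i h => hv.1 i (Fin.ext h)⟩
  · rintro ⟨v, hv, hva, hγ⟩
    refine ⟨⟨v, hv⟩, ?_⟩
    simp only [Set.mem_union, Set.mem_range, Set.mem_singleton_iff, not_or, not_exists]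
    exact ⟨fun i h => hγ i (congrArg Fin.val h), fun h => hva (congrArg Fin.val h)⟩

open SSet.stdSimplex in
lemma mem_range_vertexMap_zero_iff {m : SimplexCategoryᵒᵖ} (y : (Δ[1] : SSet.{u}).obj m) :
    y ∈ (Subcomplex.range (vertexMap 0)).obj m ↔ ∀ i, (asOrderHom y i : ℕ) = 0 := by
  constructor
  · rintro ⟨p, rfl⟩ i
    rfl
  · exact fun h => ⟨const 0 0 m, obj_ext fun i => (h i).symm⟩

namespace Prism

open SSet.stdSimplex

variable {n : ℕ} {m : SimplexCategoryᵒᵖ}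

def indicatorGT (j : Fin (n + 1)) : ⦋n + 1⦌ ⟶ ⦋1⦌ :=
  SimplexCategory.mkHom ⟨fun p => if p ≤ j.castSucc then 0 else 1, fun a b hab => by
    dsimp only
    split_ifs <;> first | rfl | (exact Fin.zero_le _) | (exfalso; order)⟩

def simplex (j : Fin (n + 1)) : (Δ[n + 1] : SSet.{u}) ⟶ Δ[n] ⊗ Δ[1] :=
  CartesianMonoidalCategory.lift (SSet.stdSimplex.map (SimplexCategory.σ j))
    (SSet.stdSimplex.map (indicatorGT j))

lemma simplex_app_fst (j : Fin (n + 1)) (γ : (Δ[n + 1] : SSet.{u}).obj m) (i) :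
    (asOrderHom ((simplex j).app m γ).1 i : ℕ) =
      if (j : ℕ) < asOrderHom γ i then (asOrderHom γ i : ℕ) - 1 else asOrderHom γ i := by
  change (j.predAbove (asOrderHom γ i) : ℕ) = _
  rcases lt_or_ge j.castSucc (asOrderHom γ i) with h | h
  · rw [Fin.predAbove_of_castSucc_lt _ _ h, Fin.val_pred,
      if_pos (by simpa [Fin.lt_def] using h)]
  · rw [Fin.predAbove_of_le_castSucc _ _ h, Fin.coe_castPred,
      if_neg (by simpa [Fin.le_def] using h)]

lemma simplex_app_snd (j : Fin (n + 1)) (γ : (Δ[n + 1] : SSet.{u}).obj m) (i) :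
    (asOrderHom ((simplex j).app m γ).2 i : ℕ) = if asOrderHom γ i ≤ (j : ℕ) then 0 else 1 := by
  change ((if asOrderHom γ i ≤ j.castSucc then 0 else 1 : Fin 2) : ℕ) = _
  simp only [Fin.le_def, Fin.val_castSucc]
  split_ifs <;> rfl

/-- All vertices of `x` are vertices of `simplex j`: see `mem_range_simplex_iff`. -/
def LiesIn (j : ℕ) (x : (Δ[n] ⊗ Δ[1] : SSet.{u}).obj m) : Prop :=
  ∀ i, ((asOrderHom x.2 i : ℕ) = 0 → asOrderHom x.1 i ≤ j) ∧
    ((asOrderHom x.2 i : ℕ) = 1 → j ≤ asOrderHom x.1 i)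

def toSimplex (x : (Δ[n] ⊗ Δ[1] : SSet.{u}).obj m) : (Δ[n + 1] : SSet.{u}).obj m :=
  objMk ⟨fun i => ⟨asOrderHom x.1 i + asOrderHom x.2 i, by
    have := (asOrderHom x.1 i).isLt
    have := (asOrderHom x.2 i).isLt
    change _ < n + 2
    omega⟩, fun a b hab => by
    have := (asOrderHom x.1).monotone hab
    have := (asOrderHom x.2).monotone hab
    simp only [Fin.le_def] at *
    omega⟩

lemma toSimplex_val (x : (Δ[n] ⊗ Δ[1] : SSet.{u}).obj m) (i) :
    (asOrderHom (toSimplex x) i : ℕ) = asOrderHom x.1 i + asOrderHom x.2 i := rfl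

lemma liesIn_simplex_app (j : Fin (n + 1)) (γ : (Δ[n + 1] : SSet.{u}).obj m) :
    LiesIn j ((simplex j).app m γ) := fun i => by
  rw [simplex_app_fst, simplex_app_snd]
  constructor <;> intro h <;> split_ifs at h ⊢ <;> omega

lemma toSimplex_simplex_app (j : Fin (n + 1)) (γ : (Δ[n + 1] : SSet.{u}).obj m) :
    toSimplex ((simplex j).app m γ) = γ :=
  obj_ext fun i => by
    rw [toSimplex_val, simplex_app_fst, simplex_app_snd]
    split_ifs <;> omega

lemma simplex_app_toSimplex {j : Fin (n + 1)} {x : (Δ[n] ⊗ Δ[1] : SSet.{u}).obj m}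
    (h : LiesIn j x) : (simplex j).app m (toSimplex x) = x := by
  refine Prod.ext (obj_ext fun i => ?_) (obj_ext fun i => ?_)
  · have := (asOrderHom x.2 i).isLt
    have := h i
    rw [simplex_app_fst, toSimplex_val]
    split_ifs <;> omega
  · have := (asOrderHom x.2 i).isLt
    have := h i
    rw [simplex_app_snd, toSimplex_val]
    split_ifs <;> omega

lemma simplex_app_injective (j : Fin (n + 1)) :
    Function.Injective ((simplex.{u} j).app m) :=
  Function.LeftInverse.injective (toSimplex_simplex_app j)

lemma mem_range_simplex_iff (j : Fin (n + 1)) (x : (Δ[n] ⊗ Δ[1] : SSet.{u}).obj m) :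
    x ∈ (Subcomplex.range (simplex j)).obj m ↔ LiesIn j x :=
  ⟨fun ⟨γ, hγ⟩ => hγ ▸ liesIn_simplex_app j γ,
    fun h => ⟨toSimplex x, simplex_app_toSimplex h⟩⟩

variable (n) in
def corner : (Δ[n] ⊗ Δ[1] : SSet.{u}).Subcomplex :=
  Subcomplex.unionProd ∂Δ[n] (Subcomplex.range (vertexMap 0))

lemma mem_corner_iff (x : (Δ[n] ⊗ Δ[1] : SSet.{u}).obj m) :
    x ∈ (corner n).obj m ↔
      (∀ i, (asOrderHom x.2 i : ℕ) = 0) ∨ ¬ Function.Surjective (asOrderHom x.1) := by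
  change (True ∧ x.2 ∈ _) ∨ (x.1 ∈ (∂Δ[n]).obj m ∧ True) ↔ _
  rw [true_and, and_true, mem_range_vertexMap_zero_iff]
  rfl

variable (n) in
def filtration (j : ℕ) : (Δ[n] ⊗ Δ[1] : SSet.{u}).Subcomplex :=
  corner n ⊔ ⨆ (l : Fin (n + 1)) (_ : j ≤ (l : ℕ)), Subcomplex.range (simplex l)

lemma mem_filtration_iff (j : ℕ) (x : (Δ[n] ⊗ Δ[1] : SSet.{u}).obj m) :
    x ∈ (filtration n j).obj m ↔
      x ∈ (corner n).obj m ∨ ∃ l : Fin (n + 1), j ≤ l ∧ LiesIn l x := by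
  simp only [filtration, Subfunctor.max_obj, Subfunctor.iSup_obj, Set.mem_union, Set.mem_iUnion,
    mem_range_simplex_iff, exists_prop]

lemma filtration_antitone : Antitone (filtration.{u} n) := fun j j' h m x hx => by
  rw [mem_filtration_iff] at hx ⊢
  obtain hx | ⟨l, hl, hx⟩ := hx
  · exact Or.inl hx
  · exact Or.inr ⟨l, h.trans hl, hx⟩

lemma filtration_eq_corner : filtration.{u} n (n + 1) = corner n := by
  refine le_antisymm (fun m x hx => ?_) le_sup_left
  obtain hx | ⟨l, hl, -⟩ := (mem_filtration_iff _ x).1 hx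
  · exact hx
  · omega

lemma filtration_zero : filtration.{u} n 0 = ⊤ := by
  classical
  refine top_le_iff.1 fun m x _ => (mem_filtration_iff 0 x).2 (Or.inr ?_)
  -- `x` lies in `simplex l` for `l` the largest first coordinate of a vertex of `x` over `0`
  let zeros := Finset.univ.filter fun i => (asOrderHom x.2 i : ℕ) = 0
  let l := zeros.sup fun i => (asOrderHom x.1 i : ℕ)
  have hl : l < n + 1 :=
    Nat.lt_succ_of_le (Finset.sup_le fun i _ => Nat.le_of_lt_succ (asOrderHom x.1 i).isLt)
  refine ⟨⟨l, hl⟩, Nat.zero_le _, fun i => ⟨fun h0 => ?_, fun h1 => ?_⟩⟩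
  · exact Finset.le_sup (f := fun i => (asOrderHom x.1 i : ℕ))
      (Finset.mem_filter.2 ⟨Finset.mem_univ _, h0⟩)
  · show l ≤ _
    refine Finset.sup_le (f := fun i => (asOrderHom x.1 i : ℕ)) fun i' hi' =>
      Fin.le_def.1 ((asOrderHom x.1).monotone ?_)
    have hi' : (asOrderHom x.2 i' : ℕ) = 0 := (Finset.mem_filter.1 hi').2
    by_contra hlt
    have := (asOrderHom x.2).monotone (le_of_not_ge hlt)
    rw [Fin.le_def] at this
    omega

lemma mem_filtration_succ_or_liesIn {j : ℕ} {x : (Δ[n] ⊗ Δ[1] : SSet.{u}).obj m}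
    (hx : x ∈ (filtration n j).obj m) : x ∈ (filtration n (j + 1)).obj m ∨ LiesIn j x := by
  rw [mem_filtration_iff] at hx ⊢
  obtain hx | ⟨l, hl, hlies⟩ := hx
  · exact Or.inl (Or.inl hx)
  · rcases hl.eq_or_lt with rfl | hl
    · exact Or.inr hlies
    · exact Or.inl (Or.inr ⟨l, hl, hlies⟩)

lemma mem_horn_of_simplex_app_mem (j : Fin (n + 1)) (γ : (Δ[n + 1] : SSet.{u}).obj m)
    (h : (simplex j).app m γ ∈ (filtration n (j + 1)).obj m) :
    γ ∈ (Λ[n + 1, j.castSucc]).obj m := by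
  by_contra hhit
  simp only [mem_horn_iff_exists, Fin.val_castSucc, not_exists, not_and, not_forall,
    not_not] at hhit
  obtain ⟨i₁, hi₁⟩ := hhit (j + 1) (by omega) (by omega)
  rcases (mem_filtration_iff _ _).1 h with hc | ⟨l, hl, hlies⟩
  · rcases (mem_corner_iff _).1 hc with hzero | hnsurj
    · have := hzero i₁
      rw [simplex_app_snd, if_neg (by omega)] at this
      omega
    · refine hnsurj fun w => ?_
      by_cases hw : (w : ℕ) < j
      · obtain ⟨i, hi⟩ := hhit w (by omega) (by omega)
        refine ⟨i, Fin.ext ?_⟩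
        rw [simplex_app_fst]
        split_ifs <;> omega
      · obtain ⟨i, hi⟩ := hhit (w + 1) (by omega) (by omega)
        refine ⟨i, Fin.ext ?_⟩
        rw [simplex_app_fst]
        split_ifs <;> omega
  · have := (hlies i₁).2
    rw [simplex_app_fst, simplex_app_snd] at this
    split_ifs at this <;> omega

lemma simplex_app_mem_of_mem_horn (j : Fin (n + 1)) (γ : (Δ[n + 1] : SSet.{u}).obj m)
    (h : γ ∈ (Λ[n + 1, j.castSucc]).obj m) :
    (simplex j).app m γ ∈ (filtration n (j + 1)).obj m := by
  obtain ⟨v, hv, hvj, hγ⟩ := (mem_horn_iff_exists _ _).1 h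
  simp only [Fin.val_castSucc] at hvj
  rw [mem_filtration_iff, mem_corner_iff]
  have hγ' := fun i => (asOrderHom γ i).isLt
  rcases lt_trichotomy v ((j : ℕ) + 1) with hv' | rfl | hv'
  · refine Or.inl (Or.inr fun hs => ?_)
    obtain ⟨i, hi⟩ := hs ⟨v, by omega⟩
    have hi : (asOrderHom ((simplex j).app m γ).1 i : ℕ) = v := congrArg Fin.val hi
    have := hγ i
    have := hγ' i
    rw [simplex_app_fst] at hi
    split_ifs at hi <;> omega
  · rcases (show (j : ℕ) = n ∨ (j : ℕ) < n by omega) with hj | hj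
    · refine Or.inl (Or.inl fun i => ?_)
      have := hγ i
      have := hγ' i
      rw [simplex_app_snd]
      split_ifs <;> omega
    · refine Or.inr ⟨⟨j + 1, by omega⟩, le_rfl, fun i => ?_⟩
      have := hγ i
      rw [simplex_app_fst, simplex_app_snd]
      dsimp only
      constructor <;> intro h <;> split_ifs at h ⊢ <;> omega
  · refine Or.inl (Or.inr fun hs => ?_)
    obtain ⟨i, hi⟩ := hs ⟨v - 1, by omega⟩
    have hi : (asOrderHom ((simplex j).app m γ).1 i : ℕ) = v - 1 := congrArg Fin.val hi
    have := hγ i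
    have := hγ' i
    rw [simplex_app_fst] at hi
    split_ifs at hi <;> omega

lemma range_simplex_le_filtration (j : Fin (n + 1)) :
    Subcomplex.range (simplex.{u} j) ≤ filtration n j := by
  rintro m _ ⟨γ, rfl⟩
  exact (mem_filtration_iff _ _).2 (Or.inr ⟨j, le_rfl, liesIn_simplex_app j γ⟩)

lemma range_horn_ι_comp_simplex_le_filtration (j : Fin (n + 1)) :
    Subcomplex.range (Λ[n + 1, j.castSucc].ι ≫ simplex.{u} j) ≤ filtration n (j + 1) := by
  rintro m _ ⟨γ, rfl⟩
  exact simplex_app_mem_of_mem_horn j γ.1 γ.2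

lemma isPushout_filtration (j : Fin (n + 1)) :
    IsPushout (Subcomplex.lift _ (range_horn_ι_comp_simplex_le_filtration.{u} j))
      Λ[n + 1, j.castSucc].ι (Subcomplex.homOfLE (filtration_antitone (Nat.le_succ j)))
      (Subcomplex.lift _ (range_simplex_le_filtration j)) := by
  refine IsPushout.of_forall_isPushout_app fun m => ?_
  -- levelwise: a pullback square whose bottom map is injective and whose images cover
  refine Types.isPushout_of_isPullback_of_mono' ?_ ?_ ?_
  · rw [Types.isPullback_iff]
    refine ⟨rfl, fun x y h => Subtype.ext h.2, fun x γ h => ?_⟩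
    have hx : x.1 = (simplex j).app m γ := congrArg Subtype.val h
    exact ⟨⟨γ, mem_horn_of_simplex_app_mem j γ (hx ▸ x.2)⟩, Subtype.ext hx.symm, rfl⟩
  · refine Set.eq_univ_of_forall fun ⟨x, hx⟩ => ?_
    rcases mem_filtration_succ_or_liesIn hx with hx | hx
    · exact Or.inl ⟨⟨x, hx⟩, rfl⟩
    · exact Or.inr ⟨toSimplex x, Subtype.ext (simplex_app_toSimplex hx)⟩
  · exact fun x y _ _ h => simplex_app_injective j (congrArg Subtype.val h)

lemma isPushoutOfMem_filtration (j : Fin (n + 1)) :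
    IsPushoutOfMem (leftHornInclsOfDim (n + 1))
      (Subcomplex.homOfLE (filtration_antitone.{u} (n := n) (Nat.le_succ j))) :=
  ⟨_, _, _, _, _, ⟨j.castSucc, j.is_lt, rfl⟩, isPushout_filtration j⟩

lemma finiteCompOfPushouts_corner_ι (n : ℕ) :
    FiniteCompOfPushouts (leftHornInclsOfDim (n + 1)) (corner.{u} n).ι := by
  rw [← filtration_eq_corner]
  exact .ι_of_antitone _ filtration_antitone filtration_zero n fun j hj =>
    isPushoutOfMem_filtration ⟨j, Nat.lt_succ_of_le hj⟩

end Prism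

/-- For every `n ≥ 0`, the inclusion `(∂Δ[n] × Δ[1]) ∪ (Δ[n] × {0}) → Δ[n] × Δ[1]` is a
finite composition of pushouts of horn inclusions `Λ[n+1, k] → Δ[n+1]` with
`0 ≤ k < n + 1`; in particular, it is a left anodyne extension. -/
theorem boundaryCornerIncl_zero_finiteCompOfPushouts_and_leftAnodyne (n : ℕ) :
    FiniteCompOfPushouts
      (fun _ _ f => ∃ k : Fin (n + 2), (k : ℕ) < n + 1 ∧
        Arrow.mk f = Arrow.mk ((horn (n + 1) k).ι))
      (boundaryCornerIncl.{u} n 0) ∧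
    LeftAnodyne (boundaryCornerIncl.{u} n 0) := by
  have h : FiniteCompOfPushouts (leftHornInclsOfDim (n + 1)) (boundaryCornerIncl.{u} n 0) := by
    rw [← boundaryCornerIso_hom_ι]
    exact (Prism.finiteCompOfPushouts_corner_ι n).iso_hom_comp _
  exact ⟨h, h.leftAnodyne (leftHornInclsOfDim_le_leftHornIncls _)⟩
end

section
/- For all n ≥ 1 and 0 ≤ k < n, the horn inclusion Λ^k[n] → Δ[n] is a retract, in the arrow category of simplicial sets, of the inclusion (Λ^k[n] × Δ[1]) ∪ (Δ[n] × {0}) → Δ[n] × Δ[1]. -/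
/-!
On vertices, `(a, 1) ↦ a` and `(a, 0) ↦ min a i` define a monotone map
`[n] × [1] → [n]`, hence a retraction `r : Δ[n] × Δ[1] → Δ[n]` of the inclusion `Δ[n] × {1}`.
Since `min a i ∈ {a, i}`, `r` only ever adds the vertex `i` to a simplex, so it maps
`Λ[n, i] × Δ[1]` into `Λ[n, i]`; and it maps `Δ[n] × {0}` into the face opposite the vertex
`n`, which lies in `Λ[n, i]` because `i < n`. The inclusion at `1` and `r` therefore exhibit
`Λ[n, i] → Δ[n]` as a retract of the corner inclusion.
-/

open CategoryTheory CategoryTheory.Limits Simplicial MonoidalCategory SSet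

universe u

/-- The union `(Λ[n, i] × Δ[1]) ∪ (Δ[n] × {e})` inside `Δ[n] × Δ[1]`, i.e. the pushout
of `Λ[n, i] × Δ[1]` and `Δ[n] × {e}` over `Λ[n, i] × {e}`. -/
noncomputable def hornCorner (n : ℕ) (i : Fin (n + 1)) (e : Fin 2) : SSet.{u} :=
  pushout ((Λ[n, i] : SSet.{u}) ◁ vertexMap e) (Λ[n, i].ι ▷ Δ[0])

/-- The inclusion `(Λ[n, i] × Δ[1]) ∪ (Δ[n] × {e}) → Δ[n] × Δ[1]`. -/
noncomputable def hornCornerIncl (n : ℕ) (i : Fin (n + 1)) (e : Fin 2) :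
    hornCorner.{u} n i e ⟶ Δ[n] ⊗ Δ[1] :=
  pushout.desc (Λ[n, i].ι ▷ Δ[1]) (Δ[n] ◁ vertexMap e)
    (whisker_exchange (Λ[n, i].ι) (vertexMap e))

open CartesianMonoidalCategory

def minHomotopy {n : ℕ} (i : Fin (n + 1)) : Fin (n + 1) × Fin 2 →o Fin (n + 1) where
  toFun p := if p.2 = 0 then min p.1 i else p.1
  monotone' := by
    rintro ⟨a, e⟩ ⟨b, f⟩ ⟨hab, hef⟩
    dsimp only
    split_ifs with he hf hf
    · exact min_le_min_right i hab
    · exact (min_le_left a i).trans hab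
    · exact absurd (Fin.le_zero_iff.mp (hf ▸ hef)) he
    · exact hab

section minHomotopy

variable {n : ℕ} (i : Fin (n + 1))

lemma minHomotopy_zero (a : Fin (n + 1)) : minHomotopy i (a, 0) = min a i := rfl

lemma minHomotopy_one (a : Fin (n + 1)) : minHomotopy i (a, 1) = a := rfl

lemma minHomotopy_eq_or_eq (p : Fin (n + 1) × Fin 2) :
    minHomotopy i p = p.1 ∨ minHomotopy i p = i := by
  obtain ⟨a, e⟩ := p
  by_cases he : e = 0
  · rw [he, minHomotopy_zero]
    exact min_choice a i
  · exact Or.inl (if_neg he)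

end minHomotopy

namespace SSet

namespace stdSimplex

def prodMap {p q n : ℕ} (φ : Fin (p + 1) × Fin (q + 1) →o Fin (n + 1)) :
    (Δ[p] ⊗ Δ[q] : SSet.{u}) ⟶ Δ[n] where
  app _ := ↾fun x ↦ objMk (φ.comp ((asOrderHom x.1).prod (asOrderHom x.2)))
  naturality _ _ _ := rfl

lemma lift_const_comp_prodMap {n q : ℕ} (φ : Fin (n + 1) × Fin (q + 1) →o Fin (n + 1))
    (e : Fin (q + 1)) (h : ∀ a, φ (a, e) = a) :
    lift (𝟙 Δ[n]) (SSet.const (obj₀Equiv.symm e)) ≫ prodMap φ = 𝟙 _ := by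
  ext ⟨⟨d⟩⟩ x t : 5
  exact h (x t)

end stdSimplex

variable {n : ℕ} {i : Fin (n + 1)}

lemma mem_horn_of_range_subset {d : ℕ} {x y : Δ[n] _⦋d⦌} (hx : x ∈ Λ[n, i].obj _)
    (h : Set.range y ⊆ Set.range x ∪ {i}) : y ∈ Λ[n, i].obj _ := by
  rw [mem_horn_iff_notMem_range] at hx ⊢
  obtain ⟨j, hji, hj⟩ := hx
  exact ⟨j, hji, fun hy ↦ (h hy).elim hj hji⟩

variable (i) in
lemma range_whiskerRight_ι_comp_prodMap_minHomotopy_le :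
    Subcomplex.range ((Λ[n, i].ι ▷ Δ[1]) ≫ stdSimplex.prodMap (minHomotopy i)) ≤ Λ[n, i] := by
  rintro ⟨⟨d⟩⟩ _ ⟨⟨x, y⟩, rfl⟩
  refine mem_horn_of_range_subset x.2 ?_
  rintro _ ⟨t, rfl⟩
  exact (minHomotopy_eq_or_eq i (x.1 t, y t)).imp (fun h ↦ ⟨t, h.symm⟩) id

lemma range_whiskerLeft_vertexMap_zero_comp_prodMap_minHomotopy_le (hi : (i : ℕ) < n) :
    Subcomplex.range ((Δ[n] ◁ vertexMap 0) ≫ stdSimplex.prodMap (minHomotopy i)) ≤ Λ[n, i] := by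
  rintro ⟨⟨d⟩⟩ _ ⟨⟨x, y⟩, rfl⟩
  have hlast : i < Fin.last n := hi
  rw [mem_horn_iff_notMem_range]
  refine ⟨Fin.last n, hlast.ne', ?_⟩
  rintro ⟨t, ht⟩
  change minHomotopy i (x t, 0) = Fin.last n at ht
  rw [minHomotopy_zero] at ht
  exact (ht ▸ min_le_right (x t) i).not_gt hlast

end SSet

lemma RetractArrow.of_comp_eq_id {A B X Y : SSet.{u}} {f : A ⟶ B} {g : X ⟶ Y}
    (i₁ : A ⟶ X) (i₂ : B ⟶ Y) (r₁ : X ⟶ A) (r₂ : Y ⟶ B) (hi : i₁ ≫ g = f ≫ i₂)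
    (hr : r₁ ≫ f = g ≫ r₂) (h₁ : i₁ ≫ r₁ = 𝟙 A) (h₂ : i₂ ≫ r₂ = 𝟙 B) :
    _root_.RetractArrow f g :=
  ⟨Arrow.homMk i₁ i₂ hi, Arrow.homMk r₁ r₂ hr, Arrow.hom_ext _ _ h₁ h₂⟩

namespace SSet.Subcomplex

lemma retractArrow_ι_of_retraction {X P T : SSet.{u}} (A : X.Subcomplex) (j : P ⟶ T)
    (v : T _⦋0⦌) (r : X ⊗ T ⟶ X)
    (hr : CartesianMonoidalCategory.lift (𝟙 X) (SSet.const v) ≫ r = 𝟙 X)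
    (hA : range ((A.ι ▷ T) ≫ r) ≤ A) (hj : range ((X ◁ j) ≫ r) ≤ A) :
    _root_.RetractArrow A.ι (pushout.desc (A.ι ▷ T) (X ◁ j) (whisker_exchange A.ι j)) := by
  have hcompat :
      ((A : SSet.{u}) ◁ j) ≫ Subcomplex.lift _ hA = (A.ι ▷ P) ≫ Subcomplex.lift _ hj := by
    rw [← cancel_mono A.ι]
    simp [whisker_exchange_assoc]
  have hs : CartesianMonoidalCategory.lift (𝟙 (A : SSet.{u})) (SSet.const v) ≫ A.ι ▷ T =
      A.ι ≫ CartesianMonoidalCategory.lift (𝟙 X) (SSet.const v) := by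
    simp
  refine _root_.RetractArrow.of_comp_eq_id
    (CartesianMonoidalCategory.lift (𝟙 (A : SSet.{u})) (SSet.const v) ≫ pushout.inl _ _)
    (CartesianMonoidalCategory.lift (𝟙 X) (SSet.const v))
    (pushout.desc (Subcomplex.lift _ hA) (Subcomplex.lift _ hj) hcompat) r ?_ ?_ ?_ hr
  · rw [Category.assoc, pushout.inl_desc, hs]
  · apply pushout.hom_ext
    · rw [pushout.inl_desc_assoc, pushout.inl_desc_assoc, Subcomplex.lift_ι]
    · rw [pushout.inr_desc_assoc, pushout.inr_desc_assoc, Subcomplex.lift_ι]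
  · rw [← cancel_mono A.ι, Category.assoc, Category.assoc, pushout.inl_desc_assoc,
      Subcomplex.lift_ι, reassoc_of% hs, hr, Category.comp_id, Category.id_comp]

end SSet.Subcomplex

/-- For all `n ≥ 1` and `0 ≤ i < n`, the horn inclusion `Λ[n, i] → Δ[n]` is a retract,
in the arrow category of simplicial sets, of the inclusion
`(Λ[n, i] × Δ[1]) ∪ (Δ[n] × {0}) → Δ[n] × Δ[1]`. -/
theorem hornInclusion_retract_of_hornCornerIncl_zero
    (n : ℕ) (i : Fin (n + 1)) (hi : (i : ℕ) < n) :
    _root_.RetractArrow (Λ[n, i].ι) (hornCornerIncl.{u} n i 0) :=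
  Subcomplex.retractArrow_ι_of_retraction Λ[n, i] (vertexMap 0)
    (stdSimplex.obj₀Equiv.symm 1) (stdSimplex.prodMap (minHomotopy i))
    (stdSimplex.lift_const_comp_prodMap _ 1 (minHomotopy_one i))
    (range_whiskerRight_ι_comp_prodMap_minHomotopy_le i)
    (range_whiskerLeft_vertexMap_zero_comp_prodMap_minHomotopy_le hi)
end
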